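/- arXiv:2601.14494 — 2 statements merged into one kernel-verified Lean document; each statement's English description precedes it below -/
import Mathlib

section
/- Let G be a graph on n vertices with k = ⌊n/2⌋, and define σ_k(G) = Σ_{v∈V(G)} C(n−|N[v]|, k)/C(n,k) and σ(G) = Σ_{v∈V(G)} 2^{−deg(v)−1}. Then σ_k(G) ≤ 2σ(G). -/
/-!
Removing a vertex at least halves `C(a, k)` as long as `a < 2k`: by Pascal's rule
`C(a + 1, k) = C(a, k) + C(a, k - 1)`, and below the middle row `C(a, k) ≤ C(a, k - 1)`.
Since `n - 1 ≤ 2⌊n/2⌋`, removing the `deg v + 1` vertices of `N[v]` one at a time gives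
`2 ^ deg v * C(n - |N[v]|, k) ≤ C(n - 1, k) ≤ C(n, k)`, which is the inequality vertex by vertex.
-/

open Finset

/-- The closed neighborhood of a vertex as a `Finset`. -/
def closedNbhd {V : Type*} [Fintype V] [DecidableEq V] (G : SimpleGraph V)
    [DecidableRel G.Adj] (v : V) : Finset V :=
  insert v (G.neighborFinset v)

namespace Nat

theorem choose_succ_le_choose_of_le {a j : ℕ} (h : a ≤ 2 * j + 1) :
    a.choose (j + 1) ≤ a.choose j := by
  refine Nat.le_of_mul_le_mul_right ?_ j.succ_pos
  calc a.choose (j + 1) * (j + 1) = a.choose j * (a - j) := choose_succ_right_eq a j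
    _ ≤ a.choose j * (j + 1) := Nat.mul_le_mul_left _ (by omega)

theorem two_mul_choose_le_choose_succ {a k : ℕ} (h : a < 2 * k) :
    2 * a.choose k ≤ (a + 1).choose k := by
  obtain ⟨j, rfl⟩ : ∃ j, k = j + 1 := Nat.exists_eq_succ_of_ne_zero (by omega)
  rw [choose_succ_succ, two_mul]
  exact Nat.add_le_add_right (choose_succ_le_choose_of_le (by omega)) _

theorem two_pow_mul_choose_le_choose_add {a m k : ℕ} (h : a + m ≤ 2 * k) :
    2 ^ m * a.choose k ≤ (a + m).choose k := by
  induction m with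
  | zero => simp
  | succ m ih =>
    calc 2 ^ (m + 1) * a.choose k = 2 * (2 ^ m * a.choose k) := by ring
      _ ≤ 2 * (a + m).choose k := Nat.mul_le_mul_left 2 (ih (by omega))
      _ ≤ (a + m + 1).choose k := two_mul_choose_le_choose_succ (by omega)

theorem two_pow_mul_choose_sub_succ_le {n d : ℕ} (hd : d < n) :
    2 ^ d * (n - (d + 1)).choose (n / 2) ≤ n.choose (n / 2) :=
  calc 2 ^ d * (n - (d + 1)).choose (n / 2)
      ≤ (n - (d + 1) + d).choose (n / 2) := two_pow_mul_choose_le_choose_add (by omega)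
    _ ≤ n.choose (n / 2) := choose_le_choose _ (by omega)

end Nat

theorem choose_sub_succ_div_choose_le {n d : ℕ} (hd : d < n) :
    ((n - (d + 1)).choose (n / 2) : ℚ) / n.choose (n / 2) ≤ 2 * 2 ^ (-(d : ℤ) - 1) := by
  have hpos : (0 : ℚ) < n.choose (n / 2) := by exact_mod_cast Nat.choose_pos (Nat.div_le_self n 2)
  have hmul : (2 : ℚ) ^ d * (n - (d + 1)).choose (n / 2) ≤ n.choose (n / 2) := by
    exact_mod_cast Nat.two_pow_mul_choose_sub_succ_le hd
  have hpow : (2 : ℚ) * 2 ^ (-(d : ℤ) - 1) = (2 ^ d)⁻¹ := by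
    rw [zpow_sub₀ two_ne_zero, zpow_neg, zpow_natCast, zpow_one]
    field_simp
  rw [hpow, div_le_iff₀ hpos, ← div_eq_inv_mul, le_div_iff₀ (by positivity), mul_comm]
  exact hmul

theorem card_closedNbhd {V : Type*} [Fintype V] [DecidableEq V] (G : SimpleGraph V)
    [DecidableRel G.Adj] (v : V) : (closedNbhd G v).card = G.degree v + 1 := by
  rw [closedNbhd, card_insert_of_notMem (G.notMem_neighborFinset_self v),
    SimpleGraph.card_neighborFinset_eq_degree]

theorem sigma_k_le_two_sigma_general {V : Type*} [Fintype V] [DecidableEq V]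
    (G : SimpleGraph V) [DecidableRel G.Adj] :
    letI n : ℕ := Fintype.card V
    letI k : ℕ := n / 2
    (∑ v : V, ((n - (closedNbhd G v).card).choose k : ℚ) / (n.choose k : ℚ))
      ≤ 2 * ∑ v : V, (2 : ℚ) ^ (-(G.degree v : ℤ) - 1) := by
  rw [mul_sum]
  refine sum_le_sum fun v _ => ?_
  have hdeg : G.degree v < Fintype.card V := by
    simpa [card_closedNbhd] using card_le_univ (closedNbhd G v)
  rw [card_closedNbhd]
  exact choose_sub_succ_div_choose_le hdeg

/-- With `k = ⌊n/2⌋`, `σ_k(G) = Σ_v C(n-|N[v]|,k)/C(n,k)` is at most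
`2 σ(G) = 2 Σ_v 2^{-deg(v)-1}`. -/
theorem sigma_k_le_two_sigma {V : Type*} [Fintype V] [DecidableEq V] [Nonempty V]
    (G : SimpleGraph V) [DecidableRel G.Adj] :
    letI n : ℕ := Fintype.card V
    letI k : ℕ := n / 2
    (∑ v : V, ((n - (closedNbhd G v).card).choose k : ℚ) / (n.choose k : ℚ))
      ≤ 2 * ∑ v : V, (2 : ℚ) ^ (-(G.degree v : ℤ) - 1) :=
  sigma_k_le_two_sigma_general G
end

section
/- Let T be a threshold graph with the notation above. Then D(T,x) = Σ_{r=1}^m x^{α_r}(1+x)^{β_r} + ε x^{|I|}, where β_r = |P_r|, α_r = |I_r| + 1, and ε = 1 if the isolated side I is a dominating set and ε = 0 otherwise. Moreover these parameters satisfy α_1 ≥ … ≥ α_m ≥ 1, β_1 < … < β_m, and α_{r+1} + β_{r+1} = α_r + β_r + 1. -/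
open Finset Polynomial

/-!
In a threshold ordering two distinct vertices are adjacent exactly when the later one lies on the
dominating side. Sort the dominating sets `S` by the last dominating-side vertex `t = c_r` they
contain. Every isolated-side vertex after `t` has no neighbour in `S`, so it must lie in `S`; no
later dominating-side vertex lies in `S`; and `t` already dominates everything else. Hence
`S = {t} ∪ I_r ∪ A` with `A ⊆ P_r` arbitrary, contributing `x^{α_r} (1+x)^{β_r}`.
A dominating set without dominating-side vertices must contain every isolated-side vertex, so
it is `I`.
Between `c_r` and `c_{r+1}` there are only isolated-side vertices, each of which leaves `I_r` and
enters `P_{r+1}` together with `c_r`; this gives `α_{r+1} + β_{r+1} = α_r + β_r + 1`.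
-/

theorem Finset.max_eq_coe_iff {α : Type*} [LinearOrder α] {s : Finset α} {a : α} :
    s.max = a ↔ a ∈ s ∧ ∀ b ∈ s, b ≤ a :=
  ⟨fun h => ⟨mem_of_max h, fun _ hb => le_max_of_eq hb h⟩, fun ⟨ha, hle⟩ =>
    le_antisymm (Finset.max_le fun b hb => WithBot.coe_le_coe.2 (hle b hb)) (le_max ha)⟩

theorem Finset.sum_powerset_pow_card {ι R : Type*} [CommSemiring R] (x : R) (s : Finset ι) :
    ∑ A ∈ s.powerset, x ^ #A = (1 + x) ^ #s := by
  simpa [add_comm] using sum_pow_mul_eq_add_pow x 1 s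

theorem Fintype.sum_withBot {α M : Type*} [Fintype α] [AddCommMonoid M] (f : WithBot α → M) :
    ∑ b, f b = f ⊥ + ∑ a : α, f a :=
  Fintype.sum_option f

variable {V : Type*}

section Domination

variable [Fintype V] [DecidableEq V] (G : SimpleGraph V) [DecidableRel G.Adj]

def IsDominating (S : Finset V) : Prop :=
  ∀ v, ∃ u ∈ S, u ∈ closedNbhd G v

instance : DecidablePred (IsDominating G) :=
  fun S => inferInstanceAs (Decidable (∀ v, ∃ u ∈ S, u ∈ closedNbhd G v))

variable {G} in
theorem mem_closedNbhd {u v : V} : u ∈ closedNbhd G v ↔ u = v ∨ G.Adj v u := by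
  simp [closedNbhd]

end Domination

section Threshold

variable [LinearOrder V] {G : SimpleGraph V} {side : V → Bool}

/-- `side j = true` marks the dominating-side vertices: each vertex is adjacent to all of its
predecessors or to none of them. -/
def IsThresholdOrder (G : SimpleGraph V) (side : V → Bool) : Prop :=
  ∀ i j : V, i < j → (G.Adj i j ↔ side j = true)

theorem IsThresholdOrder.adj_iff (h : IsThresholdOrder G side) {u v : V} :
    G.Adj u v ↔ u ≠ v ∧ side (max u v) = true := by
  rcases lt_trichotomy u v with huv | rfl | huv
  · simp [h u v huv, huv.ne, max_eq_right huv.le]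
  · simp
  · simp [G.adj_comm u v, h v u huv, huv.ne', max_eq_left huv.le]

theorem side_eq_false_of_lt_of_lt {m : ℕ} {c : Fin m → V} (hmono : StrictMono c)
    (hc : ∀ j, side j = true → ∃ r, c r = j) {r : ℕ} (h1 : r < m) (h2 : r + 1 < m) {j : V}
    (hlo : c ⟨r, h1⟩ < j) (hhi : j < c ⟨r + 1, h2⟩) : side j = false := by
  by_contra hj
  obtain ⟨s, rfl⟩ := hc j (by simpa using hj)
  rw [hmono.lt_iff_lt, Fin.lt_def] at hlo hhi
  simp only at hlo hhi
  omega

variable [Fintype V]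

/-- The paper's `I_r` for `t = c_r`. -/
def upperIsolated (side : V → Bool) (t : V) : Finset V :=
  {j | side j = false ∧ t < j}

/-- The dominating set `{t} ∪ I_r ∪ A` whose last dominating-side vertex is `t = c_r`. -/
def dominatingSetOfTop (side : V → Bool) (t : V) (A : Finset V) : Finset V :=
  insert t (upperIsolated side t ∪ A)

theorem mem_dominatingSetOfTop {t j : V} {A : Finset V} :
    j ∈ dominatingSetOfTop side t A ↔ j = t ∨ (side j = false ∧ t < j) ∨ j ∈ A := by
  simp [dominatingSetOfTop, upperIsolated]

theorem filter_lt_dominatingSetOfTop {t : V} {A : Finset V} (hA : ∀ a ∈ A, a < t) :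
    (dominatingSetOfTop side t A).filter (· < t) = A := by
  ext j
  simp only [mem_filter, mem_dominatingSetOfTop]
  constructor
  · rintro ⟨rfl | ⟨-, htj⟩ | hj, hjt⟩
    · exact absurd hjt (lt_irrefl j)
    · exact absurd hjt htj.asymm
    · exact hj
  · exact fun hj => ⟨Or.inr (Or.inr hj), hA j hj⟩

theorem card_dominatingSetOfTop {t : V} {A : Finset V} (hA : ∀ a ∈ A, a < t) :
    #(dominatingSetOfTop side t A) = #(upperIsolated side t) + 1 + #A := by
  have htA : t ∉ upperIsolated side t ∪ A := by
    simp only [mem_union, upperIsolated, mem_filter, mem_univ, lt_irrefl, and_false, false_or]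
    exact fun ht => lt_irrefl t (hA t ht)
  have hdisj : Disjoint (upperIsolated side t) A := by
    rw [disjoint_left]
    intro j hj hjA
    simp only [upperIsolated, mem_filter] at hj
    exact hj.2.2.asymm (hA j hjA)
  rw [dominatingSetOfTop, card_insert_of_notMem htA, card_union_of_disjoint hdisj]
  omega

theorem eq_dominatingSetOfTop {S : Finset V} {t : V} (ht : t ∈ S)
    (htop : ∀ u ∈ S, side u = true → u ≤ t) (hsub : upperIsolated side t ⊆ S) :
    S = dominatingSetOfTop side t (S.filter (· < t)) := by
  ext j
  rw [mem_dominatingSetOfTop, mem_filter]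
  constructor
  · intro hj
    rcases lt_trichotomy j t with hjt | rfl | htj
    · exact Or.inr (Or.inr ⟨hj, hjt⟩)
    · exact Or.inl rfl
    · refine Or.inr (Or.inl ⟨?_, htj⟩)
      by_contra hs
      exact htj.not_ge (htop j hj (by simpa using hs))
  · rintro (rfl | hj | hj)
    · exact ht
    · exact hsub (by simpa [upperIsolated] using hj)
    · exact hj.1

theorem upperIsolated_antitone : Antitone (upperIsolated (V := V) side) := by
  intro t t' htt' j hj
  simp only [upperIsolated, mem_filter, mem_univ, true_and] at hj ⊢
  exact ⟨hj.1, htt'.trans_lt hj.2⟩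

theorem card_filter_lt_strictMono : StrictMono fun t : V => #{j | j < t} := by
  intro t t' htt'
  refine card_lt_card ⟨fun j hj => ?_, fun hsub => ?_⟩
  · simp only [mem_filter, mem_univ, true_and] at hj ⊢
    exact hj.trans htt'
  · exact lt_irrefl t (mem_filter.1 (hsub (mem_filter.2 ⟨mem_univ t, htt'⟩))).2

theorem card_upperIsolated_add_card_lt_of_forall_between {t t' : V} (htt' : t < t')
    (ht' : side t' = true) (hbetween : ∀ j, t < j → j < t' → side j = false) :
    #(upperIsolated side t') + #{j | j < t'} = #(upperIsolated side t) + #{j | j < t} + 1 := by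
  have hone : ∑ j : V, (if t = j then 1 else 0) = 1 := by simp
  rw [← hone]
  simp only [upperIsolated, card_filter, ← sum_add_distrib]
  refine sum_congr rfl fun j _ => ?_
  split_ifs <;> grind

variable [DecidableRel G.Adj]

namespace IsThresholdOrder

theorem mem_closedNbhd (h : IsThresholdOrder G side) {u v : V} :
    u ∈ closedNbhd G v ↔ u = v ∨ side (max u v) = true := by
  rw [_root_.mem_closedNbhd, h.adj_iff, max_comm, ne_comm]
  tauto

theorem eq_of_isDominating_of_forall_side_eq_false (h : IsThresholdOrder G side)
    {S : Finset V} (hS : IsDominating G S) (hSside : ∀ u ∈ S, side u = false) :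
    S = univ.filter (side · = false) := by
  ext v
  rw [mem_filter, and_iff_right (mem_univ v)]
  refine ⟨hSside v, fun hv => ?_⟩
  obtain ⟨u, hu, huv⟩ := hS v
  rcases h.mem_closedNbhd.1 huv with rfl | hmax
  · exact hu
  · rcases max_choice u v with e | e <;> rw [e] at hmax
    · simp [hSside u hu] at hmax
    · simp [hv] at hmax

theorem isDominating_iff_upperIsolated_subset (h : IsThresholdOrder G side) {S : Finset V}
    {t : V} (ht : t ∈ S) (hst : side t = true) (htop : ∀ u ∈ S, side u = true → u ≤ t) :
    IsDominating G S ↔ upperIsolated side t ⊆ S := by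
  constructor
  · intro hS v hv
    simp only [upperIsolated, mem_filter, mem_univ, true_and] at hv
    obtain ⟨u, hu, huv⟩ := hS v
    rcases h.mem_closedNbhd.1 huv with rfl | hmax
    · exact hu
    · rcases max_choice u v with e | e <;> rw [e] at hmax
      · exact absurd ((htop u hu hmax).trans_lt hv.2) (not_lt.2 (max_eq_left_iff.1 e))
      · simp [hv.1] at hmax
  · intro hsub v
    by_cases hv : side v = false ∧ t < v
    · exact ⟨v, hsub (by simpa [upperIsolated] using hv), h.mem_closedNbhd.2 (Or.inl rfl)⟩
    refine ⟨t, ht, h.mem_closedNbhd.2 ?_⟩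
    rcases lt_trichotomy t v with htv | rfl | hvt
    · rw [max_eq_right htv.le]
      exact Or.inr (by simpa [htv] using hv)
    · exact Or.inl rfl
    · rw [max_eq_left hvt.le]
      exact Or.inr hst

theorem filter_isDominating_max_eq_coe (h : IsThresholdOrder G side) {t : V}
    (hst : side t = true) :
    univ.filter (fun S : Finset V => IsDominating G S ∧ (S.filter (side · = true)).max = t) =
      (univ.filter (· < t)).powerset.image (dominatingSetOfTop side t) := by
  ext S
  simp only [mem_filter, mem_univ, true_and, mem_image, mem_powerset, max_eq_coe_iff]
  constructor
  · rintro ⟨hS, ⟨htS, -⟩, htop⟩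
    have htop' : ∀ u ∈ S, side u = true → u ≤ t := fun u hu hsu => htop u ⟨hu, hsu⟩
    refine ⟨S.filter (· < t), fun j hj => by simpa using (mem_filter.1 hj).2, ?_⟩
    have hsub := (h.isDominating_iff_upperIsolated_subset htS hst htop').1 hS
    exact (eq_dominatingSetOfTop htS htop' hsub).symm
  · rintro ⟨A, hA, rfl⟩
    have hA' : ∀ a ∈ A, a < t := fun a ha => by simpa using hA ha
    have htS : t ∈ dominatingSetOfTop side t A := mem_dominatingSetOfTop.2 (Or.inl rfl)
    have htop : ∀ u ∈ dominatingSetOfTop side t A, side u = true → u ≤ t := by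
      intro u hu hsu
      rcases mem_dominatingSetOfTop.1 hu with rfl | ⟨hsu', -⟩ | huA
      · exact le_rfl
      · simp [hsu] at hsu'
      · exact (hA' u huA).le
    refine ⟨(h.isDominating_iff_upperIsolated_subset htS hst htop).2 ?_, ⟨htS, hst⟩, ?_⟩
    · intro j hj
      exact mem_dominatingSetOfTop.2 (Or.inr (Or.inl (by simpa [upperIsolated] using hj)))
    · exact fun u hu => htop u hu.1 hu.2

theorem filter_isDominating_max_eq_bot (h : IsThresholdOrder G side) :
    univ.filter (fun S : Finset V => IsDominating G S ∧ (S.filter (side · = true)).max = ⊥) =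
      if IsDominating G (univ.filter (side · = false)) then {univ.filter (side · = false)}
      else ∅ := by
  ext S
  simp only [mem_filter, mem_univ, true_and, Finset.max_eq_bot, filter_eq_empty_iff,
    Bool.not_eq_true]
  split_ifs with hI
  · rw [mem_singleton]
    constructor
    · exact fun hS => h.eq_of_isDominating_of_forall_side_eq_false hS.1 hS.2
    · rintro rfl
      exact ⟨hI, fun u hu => (mem_filter.1 hu).2⟩
  · simp only [notMem_empty, iff_false, not_and]
    intro hS hSside
    exact hI (h.eq_of_isDominating_of_forall_side_eq_false hS hSside ▸ hS)

variable {R : Type*} [CommSemiring R]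

theorem sum_pow_card_isDominating_max_eq_coe (h : IsThresholdOrder G side) (x : R) (t : V) :
    ∑ S with IsDominating G S ∧ (S.filter (side · = true)).max = t, x ^ #S =
      if side t = true then x ^ (#(upperIsolated side t) + 1) * (1 + x) ^ #{j | j < t}
      else 0 := by
  split_ifs with hst
  · have hlt : ∀ A ∈ (univ.filter (· < t)).powerset, ∀ a ∈ A, a < t :=
      fun A hA a ha => by simpa using mem_powerset.1 hA ha
    rw [h.filter_isDominating_max_eq_coe hst, sum_image fun A hA B hB hAB => ?_]
    · calc ∑ A ∈ (univ.filter (· < t)).powerset, x ^ #(dominatingSetOfTop side t A)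
          = ∑ A ∈ (univ.filter (· < t)).powerset, x ^ (#(upperIsolated side t) + 1) * x ^ #A :=
            sum_congr rfl fun A hA => by rw [card_dominatingSetOfTop (hlt A hA), pow_add]
        _ = _ := by rw [← mul_sum, sum_powerset_pow_card]
    · rw [← filter_lt_dominatingSetOfTop (hlt A hA), hAB,
        filter_lt_dominatingSetOfTop (hlt B hB)]
  · refine sum_eq_zero fun S hS => absurd ?_ hst
    exact (mem_filter.1 (mem_of_max (mem_filter.1 hS).2.2)).2

theorem sum_pow_card_isDominating (h : IsThresholdOrder G side) (x : R) :
    ∑ S with IsDominating G S, x ^ #S =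
      ∑ t with side t = true, x ^ (#(upperIsolated side t) + 1) * (1 + x) ^ #{j | j < t} +
        if IsDominating G (univ.filter (side · = false)) then
          x ^ #(univ.filter (side · = false)) else 0 := by
  rw [← sum_fiberwise _ (fun S => (S.filter (side · = true)).max), Fintype.sum_withBot, add_comm]
  simp_rw [filter_filter]
  congr 1
  · rw [sum_filter]
    exact sum_congr rfl fun t _ => h.sum_pow_card_isDominating_max_eq_coe x t
  · rw [h.filter_isDominating_max_eq_bot]
    split_ifs <;> simp

end IsThresholdOrder

end Threshold

/-- Closed form for the domination polynomial of a threshold graph: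
`D(T,x) = Σ_{r=1}^m x^{α_r}(1+x)^{β_r} + ε x^{|I|}`, where `β_r = |P_r|`,
`α_r = |I_r| + 1`, `ε = 1` iff the isolated side `I` is dominating; moreover
`α_1 ≥ … ≥ α_m ≥ 1`, `β_1 < … < β_m`, and `α_{r+1} + β_{r+1} = α_r + β_r + 1`. -/
theorem threshold_domination_polynomial {n m : ℕ} (G : SimpleGraph (Fin n))
    [DecidableRel G.Adj] (side : Fin n → Bool)
    (hside : ∀ i j : Fin n, i < j → (G.Adj i j ↔ side j = true))
    (c : Fin m → Fin n) (hmono : StrictMono c)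
    (hc : ∀ j : Fin n, side j = true ↔ ∃ r : Fin m, c r = j) :
    letI I : Finset (Fin n) := univ.filter (fun j : Fin n => side j = false)
    letI β : Fin m → ℕ := fun r => (univ.filter (fun j : Fin n => j < c r)).card
    letI α : Fin m → ℕ :=
      fun r => (univ.filter (fun j : Fin n => side j = false ∧ c r < j)).card + 1
    letI ε : ℕ := if ∀ v : Fin n, ∃ u ∈ I, u ∈ closedNbhd G v then 1 else 0
    ((∑ S ∈ univ.powerset.filter
          (fun S : Finset (Fin n) => ∀ v : Fin n, ∃ u ∈ S, u ∈ closedNbhd G v),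
        (X : Polynomial ℕ) ^ S.card)
      = (∑ r : Fin m, (X : Polynomial ℕ) ^ (α r) * (1 + X) ^ (β r)) + ε • X ^ I.card)
    ∧ (∀ r r' : Fin m, r ≤ r' → α r' ≤ α r)
    ∧ (∀ r : Fin m, 1 ≤ α r)
    ∧ (∀ r r' : Fin m, r < r' → β r < β r')
    ∧ ∀ (r : ℕ) (h1 : r < m) (h2 : r + 1 < m),
        α ⟨r + 1, h2⟩ + β ⟨r + 1, h2⟩ = α ⟨r, h1⟩ + β ⟨r, h1⟩ + 1 := by
  beta_reduce
  have h : IsThresholdOrder G side := hside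
  have hdom : ∀ r, side (c r) = true := fun r => (hc _).2 ⟨r, rfl⟩
  refine ⟨?_, fun r r' hrr' => ?_, fun r => Nat.le_add_left 1 _,
    fun r r' hrr' => card_filter_lt_strictMono (hmono hrr'), fun r h1 h2 => ?_⟩
  · have hD : univ.filter (side · = true) = univ.image c := by ext j; simp [hc]
    have key := h.sum_pow_card_isDominating (X : ℕ[X])
    rw [hD, sum_image hmono.injective.injOn] at key
    rw [powerset_univ]
    -- the goals left differ only by unfolding and by `Decidable` instances
    convert key using 3
    · exact Iff.rfl
    · rfl
    · rw [ite_smul, one_smul, zero_smul]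
      exact if_congr Iff.rfl rfl rfl
  · exact Nat.add_le_add_right (card_le_card (upperIsolated_antitone (hmono.monotone hrr'))) 1
  · have := card_upperIsolated_add_card_lt_of_forall_between
      (hmono (Fin.mk_lt_mk.2 (lt_add_one r))) (hdom _)
      fun j => side_eq_false_of_lt_of_lt hmono (fun j => (hc j).1) h1 h2
    simp only [upperIsolated] at this
    omega
end
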